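/- Let m ≥ 1, 1 ≤ p_j < ∞ for j = 1,…,m, 1/p = Σ_{j=1}^m 1/p_j, and ω⃗ = (ω₁,…,ω_m) ∈ A_{p⃗}^∞(φ) with ν_{ω⃗} = ∏_{j=1}^m ω_j^{p/p_j}. Then there exists some θ₀ > 0, depending on p, m, p_j, and a constant C > 0 such that ‖𝓜_{φ,θ₀}(f⃗)‖_{L^{p,∞}(ν_{ω⃗})} ≤ C ∏_{j=1}^m ‖f_j‖_{L^{p_j}(ω_j)} for all f⃗. -/

import Mathlib

/-!
On a single cube `Q`, Hölder's inequality against the weights `ω_j` (the essential infimum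
when `p_j = 1`) combined with the `A_{p⃗}^θ(φ)` condition gives
`ν(Q)^{1/p} ∏_j (φ(Q)^{θ₀}|Q|)⁻¹ ∫_Q |f_j| ≤ C ∏_j ‖f_j χ_Q‖_{L^{p_j}(ω_j)}` for every `θ₀ ≥ θ`.
If such an average over a cube containing `x` exceeds `t`, then up to a factor `2^{n+θ₀}` so does
the average over the doubled cube centred at `x`. Besicovitch's covering theorem splits these
centred cubes into boundedly many disjoint subfamilies; on each of them one sums
`ν(Q) ≤ (C/t)^p ∏_j ‖f_j χ_Q‖^p` and applies Hölder's inequality for sums with the exponents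
`p/p_j`, which add up to `1`.
-/

open MeasureTheory ENNReal Set Filter

noncomputable section

/-- `ℝⁿ` with the Euclidean norm. -/
abbrev En (n : ℕ) := EuclideanSpace ℝ (Fin n)

/-- The (closed) cube centered at `x` with sidelength `r`. -/
def cube {n : ℕ} (x : En n) (r : ℝ) : Set (En n) :=
  {y | ∀ i, |y i - x i| ≤ r / 2}

/-- Weighted `L^p` norm `(∫ |f|^p w)^{1/p}` (valued in `ℝ≥0∞`). -/
def wLp {n : ℕ} (p : ℝ) (w f : En n → ℝ) : ℝ≥0∞ :=
  (∫⁻ x, ENNReal.ofReal (|f x| ^ p * w x)) ^ (1 / p)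

/-- Weighted weak `L^p` norm `sup_{t>0} t · w({|f|>t})^{1/p}`. -/
def wLpWeak {n : ℕ} (p : ℝ) (w f : En n → ℝ) : ℝ≥0∞ :=
  ⨆ (t : ℝ) (_ : 0 < t), ENNReal.ofReal t *
    (∫⁻ x in {x | t < |f x|}, ENNReal.ofReal (w x)) ^ (1 / p)

/-- The dilated kernel `K_t(x,y⃗) = t^{-mn} K(x/t, y⃗/t)`. -/
def Kt {n m : ℕ} (K : En n → (Fin m → En n) → ℝ) (t : ℝ) (x : En n)
    (y : Fin m → En n) : ℝ :=
  t ^ (-(m * n : ℝ)) * K (t⁻¹ • x) fun j => t⁻¹ • y j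

/-- The multilinear square function associated with the kernel `K`. -/
def sqOp {n m : ℕ} (K : En n → (Fin m → En n) → ℝ) (f : Fin m → En n → ℝ)
    (x : En n) : ℝ :=
  (∫ t in Ioi (0 : ℝ),
      (∫ y : Fin m → En n, Kt K t x y * ∏ j, f j (y j)) ^ 2 / t) ^ (1 / 2 : ℝ)

/-- Size condition (1.2). -/
def SizeCond (n m : ℕ) (K : En n → (Fin m → En n) → ℝ) : Prop :=
  ∀ N : ℝ, 0 ≤ N → ∃ C > 0, ∀ (y0 : En n) (y : Fin m → En n),
    0 < ∑ j, dist y0 (y j) →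
    (∫ t in Ioi (0 : ℝ), (Kt K t y0 y) ^ 2 / t) ^ (1 / 2 : ℝ) ≤
      C * (∑ j, dist y0 (y j)) ^ (-(m * n : ℝ)) *
        (1 + ∑ j, dist y0 (y j)) ^ (-N)

/-- The cube `Δ_k = Q(y₀, 2^k √(mn) |y₀ - y₀'|)`. -/
def deltaCube {n : ℕ} (m : ℕ) (y0 y0' : En n) (k : ℕ) : Set (En n) :=
  cube y0 (2 ^ k * Real.sqrt (m * n) * dist y0 y0')

/-- The "annulus" `(Δ_{k+2})^m \ (Δ_{k+1})^m`. -/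
def annulus {n : ℕ} (m : ℕ) (y0 y0' : En n) (k : ℕ) : Set (Fin m → En n) :=
  {y | ∀ j, y j ∈ deltaCube m y0 y0' (k + 2)} \
    {y | ∀ j, y j ∈ deltaCube m y0 y0' (k + 1)}

/-- Generalized smoothness condition (1.4) with constants `Ck`. -/
def GenSmoothCond (n m : ℕ) (q q' : ℝ) (Ck : ℕ → ℝ)
    (K : En n → (Fin m → En n) → ℝ) : Prop :=
  ∀ N : ℝ, 0 ≤ N → ∃ C > 0, ∀ (k : ℕ) (y0 y0' : En n), y0 ≠ y0' →
    (∫ t in Ioi (0 : ℝ),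
        (∫ y in annulus m y0 y0' k, |Kt K t y0 y - Kt K t y0' y| ^ q) ^ (2 / q)
          / t) ^ (1 / 2 : ℝ) ≤
      C * Ck k * dist y0 y0' ^ (-(m * n / q')) *
        (1 + 2 ^ k * dist y0 y0') ^ (-N) * (2 : ℝ) ^ (-((k : ℝ) * m * n / q'))

/-- Definition 1.1: a new multilinear square operator with generalized kernel. -/
structure IsGenSquareOp (n m : ℕ) (q q' : ℝ) (Ck : ℕ → ℝ)
    (K : En n → (Fin m → En n) → ℝ) : Prop where
  ck_pos : ∀ k, 0 < Ck k
  size : SizeCond n m K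
  smooth : GenSmoothCond n m q q' Ck K
  weak_bound : ∃ s : Fin m → ℝ, (∀ j, 1 ≤ s j ∧ s j ≤ q') ∧ ∃ C > 0,
    ∀ f : Fin m → En n → ℝ, (∀ j, Measurable (f j)) →
      wLpWeak (∑ j, (s j)⁻¹)⁻¹ (fun _ => 1) (sqOp K f) ≤
        ENNReal.ofReal C * ∏ j, wLp (s j) (fun _ => 1) (f j)

/-- The multiple weight `ν_{ω⃗} = ∏ ω_j^{p/p_j}`. -/
def nuW {n m : ℕ} (p : Fin m → ℝ) (w : Fin m → En n → ℝ) (x : En n) : ℝ :=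
  ∏ j, w j x ^ ((∑ i, (p i)⁻¹)⁻¹ / p j)

/-- The multiple weight class `A_{p⃗}^θ(φ)`. -/
def MultiApTheta (n m : ℕ) (p : Fin m → ℝ) (θ : ℝ) (w : Fin m → En n → ℝ) : Prop :=
  (∀ j x, 0 ≤ w j x) ∧ (∀ j, LocallyIntegrable (w j) volume) ∧
  ∃ C > 0, ∀ (x : En n) (r : ℝ), 0 < r →
    ((ENNReal.ofReal ((1 + r) ^ θ) * volume (cube x r))⁻¹ *
        ∫⁻ y in cube x r, ENNReal.ofReal (nuW p w y)) ^ (∑ i, (p i)⁻¹) *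
      ∏ j,
        (if p j = 1 then
          (essInf (fun y => ENNReal.ofReal (w j y)) (volume.restrict (cube x r)))⁻¹
        else
          ((ENNReal.ofReal ((1 + r) ^ θ) * volume (cube x r))⁻¹ *
            ∫⁻ y in cube x r,
              ENNReal.ofReal (w j y) ^ (1 - p j / (p j - 1))) ^ (1 - (p j)⁻¹))
      ≤ ENNReal.ofReal C

/-- The scalar weight class `A_p^θ(φ)` (with the `ess inf` convention at `p = 1`). -/
def ApTheta (n : ℕ) (p θ : ℝ) (w : En n → ℝ) : Prop :=
  (∀ x, 0 ≤ w x) ∧ LocallyIntegrable w volume ∧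
  ∃ C > 0, ∀ (x : En n) (r : ℝ), 0 < r →
    if p = 1 then
      (ENNReal.ofReal ((1 + r) ^ θ) * volume (cube x r))⁻¹ *
          (∫⁻ y in cube x r, ENNReal.ofReal (w y)) ≤
        ENNReal.ofReal C *
          essInf (fun y => ENNReal.ofReal (w y)) (volume.restrict (cube x r))
    else
      ((ENNReal.ofReal ((1 + r) ^ θ) * volume (cube x r))⁻¹ *
          ∫⁻ y in cube x r, ENNReal.ofReal (w y)) ^ (1 / p) *
        ((ENNReal.ofReal ((1 + r) ^ θ) * volume (cube x r))⁻¹ *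
          ∫⁻ y in cube x r, ENNReal.ofReal (w y) ^ (-1 / (p - 1))) ^ (1 - 1 / p) ≤
        ENNReal.ofReal C

/-- Dyadic cube of generation `k` indexed by `v ∈ ℤⁿ`; its sidelength is `2^{-k}`. -/
def dyadicCube (n : ℕ) (k : ℤ) (v : Fin n → ℤ) : Set (En n) :=
  {y | ∀ i, (v i : ℝ) * 2 ^ (-k) ≤ y i ∧ y i < ((v i : ℝ) + 1) * 2 ^ (-k)}

/-- Average of `f` on `Q`. -/
def cubeAvg {n : ℕ} (Q : Set (En n)) (f : En n → ℝ) : ℝ :=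
  (volume Q).toReal⁻¹ * ∫ y in Q, f y

/-- The dyadic maximal function `M^△_{φ,η}`. -/
def dyadicMax (n : ℕ) (η : ℝ) (f : En n → ℝ) (x : En n) : ℝ≥0∞ :=
  ⨆ (k : ℤ) (v : Fin n → ℤ) (_ : x ∈ dyadicCube n k v),
    (ENNReal.ofReal ((1 + (2 : ℝ) ^ (-k)) ^ η) * volume (dyadicCube n k v))⁻¹ *
      ∫⁻ y in dyadicCube n k v, ENNReal.ofReal |f y|

/-- The dyadic sharp maximal function `M^{♯,△}_{φ,η}`. -/
def sharpMax (n : ℕ) (η : ℝ) (f : En n → ℝ) (x : En n) : ℝ≥0∞ :=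
  (⨆ (k : ℤ) (v : Fin n → ℤ) (_ : x ∈ dyadicCube n k v) (_ : (2 : ℝ) ^ (-k) < 1),
      (volume (dyadicCube n k v))⁻¹ *
        ∫⁻ y in dyadicCube n k v,
          ENNReal.ofReal |f y - cubeAvg (dyadicCube n k v) f|) +
  ⨆ (k : ℤ) (v : Fin n → ℤ) (_ : x ∈ dyadicCube n k v) (_ : 1 ≤ (2 : ℝ) ^ (-k)),
    (ENNReal.ofReal ((1 + (2 : ℝ) ^ (-k)) ^ η) * volume (dyadicCube n k v))⁻¹ *
      ∫⁻ y in dyadicCube n k v, ENNReal.ofReal |f y|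

def dyadicMaxDelta (n : ℕ) (δ η : ℝ) (f : En n → ℝ) (x : En n) : ℝ≥0∞ :=
  (dyadicMax n η (fun y => |f y| ^ δ) x) ^ (1 / δ)

def sharpMaxDelta (n : ℕ) (δ η : ℝ) (f : En n → ℝ) (x : En n) : ℝ≥0∞ :=
  (sharpMax n η (fun y => |f y| ^ δ) x) ^ (1 / δ)

/-- The multilinear maximal operator `𝓜_{φ,η}`. -/
def multiMax (n m : ℕ) (η : ℝ) (f : Fin m → En n → ℝ) (x : En n) : ℝ≥0∞ :=
  ⨆ (c : En n) (r : ℝ) (_ : 0 < r) (_ : x ∈ cube c r),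
    ∏ j, (ENNReal.ofReal ((1 + r) ^ η) * volume (cube c r))⁻¹ *
      ∫⁻ y in cube c r, ENNReal.ofReal |f j y|

def multiMaxDelta (n m : ℕ) (δ η : ℝ) (f : Fin m → En n → ℝ) (x : En n) : ℝ≥0∞ :=
  (multiMax n m η (fun j y => |f j y| ^ δ) x) ^ (1 / δ)

/-- `L^l` "norm" (in `z`) of an `ℝ≥0∞`-valued function, allowing `l = ∞`. -/
def lpFull (n : ℕ) (l : ℝ≥0∞) (g : En n → ℝ≥0∞) : ℝ≥0∞ :=
  if l = ∞ then essSup g volume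
  else (∫⁻ z, g z ^ l.toReal) ^ (1 / l.toReal)

/-- Weighted `L^p` norm of `f` restricted to `Q`, i.e. `‖f χ_Q‖_{L^p(w)}`. -/
def wLpOn {n : ℕ} (Q : Set (En n)) (p : ℝ) (w f : En n → ℝ) : ℝ≥0∞ :=
  (∫⁻ x in Q, ENNReal.ofReal (|f x| ^ p * w x)) ^ (1 / p)

/-- Weighted weak `L^p` norm of `f χ_Q`. -/
def wLpWeakOn {n : ℕ} (Q : Set (En n)) (p : ℝ) (w f : En n → ℝ) : ℝ≥0∞ :=
  ⨆ (t : ℝ) (_ : 0 < t), ENNReal.ofReal t *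
    (∫⁻ x in Q ∩ {x | t < |f x|}, ENNReal.ofReal (w x)) ^ (1 / p)

/-- `u(Q) = ∫_Q u`. -/
def wInt {n : ℕ} (Q : Set (En n)) (u : En n → ℝ) : ℝ≥0∞ :=
  ∫⁻ x in Q, ENNReal.ofReal (u x)

/-- The strong Morrey norm `‖f‖_{M^{p,l}_{α,λ}(u,w)}`. -/
def morreyNorm (n : ℕ) (α lam p : ℝ) (l : ℝ≥0∞) (u w f : En n → ℝ) : ℝ≥0∞ :=
  ⨆ (r : ℝ) (_ : 0 < r), lpFull n l fun z =>
    ENNReal.ofReal ((1 + r) ^ α) * (wInt (cube z r) u) ^ (-lam) *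
      wLpOn (cube z r) p w f

/-- The weak Morrey norm `‖f‖_{WM^{p,l}_{α,λ}(u,w)}`. -/
def weakMorreyNorm (n : ℕ) (α lam p : ℝ) (l : ℝ≥0∞) (u w f : En n → ℝ) : ℝ≥0∞ :=
  ⨆ (r : ℝ) (_ : 0 < r), lpFull n l fun z =>
    ENNReal.ofReal ((1 + r) ^ α) * (wInt (cube z r) u) ^ (-lam) *
      wLpWeakOn (cube z r) p w f

/-- The vector-valued Morrey norm `‖f⃗‖_{M^{p⃗,l}_{α,λ}(u,w⃗)}`. -/
def vecMorreyNorm (n m : ℕ) (α lam : ℝ) (p : Fin m → ℝ) (l : ℝ≥0∞)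
    (u : En n → ℝ) (w : Fin m → En n → ℝ) (f : Fin m → En n → ℝ) : ℝ≥0∞ :=
  ⨆ (r : ℝ) (_ : 0 < r), lpFull n l fun z =>
    ENNReal.ofReal ((1 + r) ^ α) * (wInt (cube z r) u) ^ (-lam) *
      ∏ j, wLpOn (cube z r) (p j) (w j) (f j)

/-- Weighted `L^p` norm of an `ℝ≥0∞`-valued function. -/
def wLpE (n : ℕ) (p : ℝ) (w : En n → ℝ) (g : En n → ℝ≥0∞) : ℝ≥0∞ :=
  (∫⁻ x, g x ^ p * ENNReal.ofReal (w x)) ^ (1 / p)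

/-- Weighted weak `L^p` norm of an `ℝ≥0∞`-valued function. -/
def wLpWeakE (n : ℕ) (p : ℝ) (w : En n → ℝ) (g : En n → ℝ≥0∞) : ℝ≥0∞ :=
  ⨆ (t : ℝ) (_ : 0 < t), ENNReal.ofReal t *
    (∫⁻ x in {x | ENNReal.ofReal t < g x}, ENNReal.ofReal (w x)) ^ (1 / p)

section WeightedHolder

variable {α : Type*} [MeasurableSpace α] {μ : Measure α}

theorem lintegral_le_essInf_inv_mul_lintegral {f w : α → ℝ≥0∞} (h0 : essInf w μ ≠ 0)
    (htop : essInf w μ ≠ ⊤) :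
    ∫⁻ x, f x ∂μ ≤ (essInf w μ)⁻¹ * ∫⁻ x, f x * w x ∂μ := by
  rw [← lintegral_const_mul' _ _ (ENNReal.inv_ne_top.2 h0)]
  refine lintegral_mono_ae ?_
  filter_upwards [ae_essInf_le (f := w) (μ := μ)] with x hx
  calc f x = (essInf w μ)⁻¹ * essInf w μ * f x := by
        rw [ENNReal.inv_mul_cancel h0 htop, one_mul]
    _ ≤ (essInf w μ)⁻¹ * (f x * w x) := by
        rw [mul_assoc, mul_comm (essInf w μ)]
        gcongr

/-- Hölder's inequality for `f = (f^p w)^{1/p} w^{-1/p}`. -/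
theorem lintegral_le_lintegral_rpow_mul_weight {p q : ℝ} (hpq : p.HolderConjugate q)
    {f w : α → ℝ≥0∞} (hf : AEMeasurable f μ) (hw : AEMeasurable w μ)
    (hw0 : ∀ᵐ x ∂μ, w x ≠ 0) (hwtop : ∀ᵐ x ∂μ, w x ≠ ⊤) :
    ∫⁻ x, f x ∂μ ≤
      (∫⁻ x, f x ^ p * w x ∂μ) ^ p⁻¹ * (∫⁻ x, w x ^ (1 - q) ∂μ) ^ q⁻¹ := by
  have hp0 : p ≠ 0 := hpq.ne_zero
  have hsplit : ∀ᵐ x ∂μ, f x = (f x ^ p * w x) ^ p⁻¹ * w x ^ (-p⁻¹) := by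
    filter_upwards [hw0, hwtop] with x hx0 hxtop
    rw [ENNReal.mul_rpow_of_nonneg _ _ hpq.inv_nonneg, ← ENNReal.rpow_mul,
      mul_inv_cancel₀ hp0, ENNReal.rpow_one, mul_assoc, ← ENNReal.rpow_add _ _ hx0 hxtop,
      add_neg_cancel, ENNReal.rpow_zero, mul_one]
  have hG : ∀ x, (w x ^ (-p⁻¹)) ^ q = w x ^ (1 - q) := fun x => by
    rw [← ENNReal.rpow_mul]
    congr 1
    have := hpq.mul_eq_add
    field_simp
    linarith
  have hF : ∀ x, ((f x ^ p * w x) ^ p⁻¹) ^ p = f x ^ p * w x := fun x => by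
    rw [← ENNReal.rpow_mul, inv_mul_cancel₀ hp0, ENNReal.rpow_one]
  calc ∫⁻ x, f x ∂μ = ∫⁻ x, ((fun x => (f x ^ p * w x) ^ p⁻¹) * fun x => w x ^ (-p⁻¹)) x ∂μ :=
        lintegral_congr_ae hsplit
    _ ≤ _ := ENNReal.lintegral_mul_le_Lp_mul_Lq μ hpq
        (((hf.pow_const p).mul hw).pow_const _) (hw.pow_const _)
    _ = _ := by simp only [hF, hG, one_div]

end WeightedHolder

theorem ENNReal.tsum_prod_rpow_le_prod_tsum_rpow {ι κ : Type*} [Fintype κ] (a : κ → ι → ℝ≥0∞)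
    {e : κ → ℝ} (he0 : ∀ k, 0 ≤ e k) (he : ∑ k, e k = 1) :
    ∑' i, ∏ k, a k i ^ e k ≤ ∏ k, (∑' i, a k i) ^ e k := by
  let : MeasurableSpace ι := ⊤
  have : MeasurableSingletonClass ι := ⟨fun _ => trivial⟩
  simpa only [lintegral_count] using ENNReal.lintegral_prod_norm_pow_le (μ := Measure.count)
    Finset.univ (fun k _ => (measurable_from_top (f := a k)).aemeasurable) he fun k _ => he0 k

open Function in
theorem tsum_prod_setLIntegral_rpow_le {α ι κ : Type*} [MeasurableSpace α] [Countable ι]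
    [Fintype κ] {μ : Measure α} {s : ι → Set α} (hs : ∀ i, MeasurableSet (s i))
    (hd : Pairwise (Disjoint on s)) (g : κ → α → ℝ≥0∞) {e : κ → ℝ} (he0 : ∀ k, 0 ≤ e k)
    (he : ∑ k, e k = 1) :
    ∑' i, ∏ k, (∫⁻ x in s i, g k x ∂μ) ^ e k ≤ ∏ k, (∫⁻ x, g k x ∂μ) ^ e k := by
  refine (ENNReal.tsum_prod_rpow_le_prod_tsum_rpow _ he0 he).trans ?_
  gcongr with k
  · exact he0 k
  rw [← lintegral_iUnion hs hd]
  exact setLIntegral_le_lintegral _ _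

theorem ENNReal.prod_rpow_eq_rpow_sum {ι : Type*} (s : Finset ι) {x : ℝ≥0∞} (hx0 : x ≠ 0)
    (hxtop : x ≠ ⊤) (a : ι → ℝ) : ∏ i ∈ s, x ^ a i = x ^ ∑ i ∈ s, a i := by
  classical
  induction s using Finset.induction with
  | empty => simp
  | insert i s hi ih =>
    rw [Finset.prod_insert hi, Finset.sum_insert hi, ih, ← ENNReal.rpow_add _ _ hx0 hxtop]

theorem cube_eq_preimage_pi {n : ℕ} (x : En n) (r : ℝ) :
    cube x r = (MeasurableEquiv.toLp 2 (Fin n → ℝ)).symm ⁻¹'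
      Set.pi univ fun i => Icc (x i - r / 2) (x i + r / 2) := by
  ext y
  simp only [cube, mem_ofPred_eq, mem_preimage, Set.mem_pi, mem_univ, forall_true_left, mem_Icc,
    MeasurableEquiv.toLp_symm_apply, abs_le]
  exact forall_congr' fun i => by constructor <;> rintro ⟨h₁, h₂⟩ <;> constructor <;> linarith

theorem measurableSet_cube {n : ℕ} (x : En n) (r : ℝ) : MeasurableSet (cube x r) := by
  rw [cube_eq_preimage_pi]
  exact (MeasurableSet.univ_pi fun _ => measurableSet_Icc).preimage (MeasurableEquiv.measurable _)

theorem volume_cube {n : ℕ} (x : En n) {r : ℝ} (hr : 0 ≤ r) :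
    volume (cube x r) = ENNReal.ofReal (r ^ n) := by
  rw [cube_eq_preimage_pi,
    (EuclideanSpace.volume_preserving_symm_measurableEquiv_toLp (Fin n)).measure_preimage
      (MeasurableSet.univ_pi fun _ => measurableSet_Icc).nullMeasurableSet,
    volume_pi_pi]
  simp only [Real.volume_Icc, add_sub_sub_cancel, add_halves, Finset.prod_const,
    Finset.card_univ, Fintype.card_fin, ENNReal.ofReal_pow hr]

theorem cube_subset_cube_two_mul {n : ℕ} {c x : En n} {r : ℝ} (hx : x ∈ cube c r) :
    cube c r ⊆ cube x (2 * r) := fun y hy i => by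
  have := abs_sub_le (y i) (c i) (x i)
  have := hy i
  have := abs_sub_comm (c i) (x i) ▸ hx i
  linarith

theorem cube_two_mul_eq_preimage_closedBall {n : ℕ} (x : En n) {ρ : ℝ} (hρ : 0 ≤ ρ) :
    cube x (2 * ρ) = WithLp.ofLp ⁻¹' Metric.closedBall (WithLp.ofLp x) ρ := by
  ext y
  simp only [cube, mem_ofPred_eq, mem_preimage, Metric.mem_closedBall, dist_pi_le_iff hρ,
    Real.dist_eq]
  exact forall_congr' fun i => by constructor <;> intro h <;> linarith

/-- `φ(Q)^θ |Q|` for `Q = cube c r`. -/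
def phiVol {n : ℕ} (θ : ℝ) (c : En n) (r : ℝ) : ℝ≥0∞ :=
  ENNReal.ofReal ((1 + r) ^ θ) * volume (cube c r)

def phiAvg {n : ℕ} (θ : ℝ) (c : En n) (r : ℝ) (g : En n → ℝ≥0∞) : ℝ≥0∞ :=
  (phiVol θ c r)⁻¹ * ∫⁻ y in cube c r, g y

section PhiVol

variable {n : ℕ} {θ : ℝ} {c : En n} {r : ℝ}

theorem phiVol_eq (hr : 0 ≤ r) : phiVol θ c r = ENNReal.ofReal ((1 + r) ^ θ * r ^ n) := by
  rw [phiVol, volume_cube c hr, ENNReal.ofReal_mul (by positivity)]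

theorem phiVol_ne_zero (hr : 0 < r) : phiVol θ c r ≠ 0 := by
  rw [phiVol_eq hr.le, ne_eq, ENNReal.ofReal_eq_zero, not_le]
  positivity

theorem phiVol_ne_top (hr : 0 ≤ r) : phiVol θ c r ≠ ⊤ := by
  rw [phiVol_eq hr]
  exact ENNReal.ofReal_ne_top

theorem phiVol_mono_exponent {θ₀ : ℝ} (hθ : θ ≤ θ₀) (hr : 0 ≤ r) :
    phiVol θ c r ≤ phiVol θ₀ c r := by
  rw [phiVol_eq hr, phiVol_eq hr]
  gcongr
  linarith

theorem phiVol_two_mul_le (hθ : 0 ≤ θ) (hr : 0 ≤ r) (x : En n) :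
    phiVol θ x (2 * r) ≤ ENNReal.ofReal (2 ^ ((n : ℝ) + θ)) * phiVol θ c r := by
  rw [phiVol_eq (by positivity), phiVol_eq hr, ← ENNReal.ofReal_mul (by positivity)]
  refine ENNReal.ofReal_le_ofReal ?_
  calc (1 + 2 * r) ^ θ * (2 * r) ^ n ≤ (2 * (1 + r)) ^ θ * (2 * r) ^ n := by
        gcongr
        linarith
    _ = 2 ^ ((n : ℝ) + θ) * ((1 + r) ^ θ * r ^ n) := by
        rw [Real.mul_rpow zero_le_two (by positivity), Real.rpow_add zero_lt_two,
          Real.rpow_natCast, mul_pow]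
        ring

end PhiVol

section PhiAvg

variable {n : ℕ} {θ : ℝ} {c : En n} {r : ℝ}

theorem phiAvg_anti_exponent {θ₀ : ℝ} (hθ : θ ≤ θ₀) (hr : 0 ≤ r) (g : En n → ℝ≥0∞) :
    phiAvg θ₀ c r g ≤ phiAvg θ c r g := by
  unfold phiAvg
  gcongr
  exact phiVol_mono_exponent hθ hr

theorem phiAvg_le_phiAvg_two_mul (hθ : 0 ≤ θ) (hr : 0 < r) {x : En n} (hx : x ∈ cube c r)
    (g : En n → ℝ≥0∞) :
    phiAvg θ c r g ≤ ENNReal.ofReal (2 ^ ((n : ℝ) + θ)) * phiAvg θ x (2 * r) g := by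
  set K := ENNReal.ofReal (2 ^ ((n : ℝ) + θ))
  have hK0 : K ≠ 0 := (ENNReal.ofReal_pos.2 (by positivity)).ne'
  have hinv : (phiVol θ c r)⁻¹ ≤ K * (phiVol θ x (2 * r))⁻¹ :=
    calc (phiVol θ c r)⁻¹ = K * (K⁻¹ * (phiVol θ c r)⁻¹) := by
          rw [← mul_assoc, ENNReal.mul_inv_cancel hK0 ENNReal.ofReal_ne_top, one_mul]
      _ = K * (K * phiVol θ c r)⁻¹ := by
          rw [ENNReal.mul_inv (Or.inl hK0) (Or.inl ENNReal.ofReal_ne_top)]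
      _ ≤ K * (phiVol θ x (2 * r))⁻¹ := by
          gcongr
          exact phiVol_two_mul_le hθ hr.le x
  calc phiAvg θ c r g
      ≤ K * (phiVol θ x (2 * r))⁻¹ * ∫⁻ y in cube x (2 * r), g y := by
        unfold phiAvg
        gcongr
        exact cube_subset_cube_two_mul hx
    _ = K * phiAvg θ x (2 * r) g := by rw [phiAvg, mul_assoc]

end PhiAvg

theorem sum_inv_pos {m : ℕ} [NeZero m] {p : Fin m → ℝ} (hp : ∀ j, 1 ≤ p j) :
    0 < ∑ i, (p i)⁻¹ :=
  Finset.sum_pos (fun i _ => inv_pos.2 (by linarith [hp i])) Finset.univ_nonempty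

theorem one_sub_div_sub_one_neg {p : ℝ} (hp : 1 < p) : 1 - p / (p - 1) < 0 := by
  rw [sub_neg, lt_div_iff₀ (by linarith)]
  linarith

/-- The factor of `w = ω_j` in the `A_{p⃗}^θ(φ)` condition on `Q = cube c r`:
`(ess inf_Q w)⁻¹` if `p = 1`, and `((φ(Q)^θ |Q|)⁻¹ ∫_Q w^{1-p'})^{1/p'}` otherwise. -/
def apFactor {n : ℕ} (p θ : ℝ) (w : En n → ℝ) (c : En n) (r : ℝ) : ℝ≥0∞ :=
  if p = 1 then (essInf (fun y => ENNReal.ofReal (w y)) (volume.restrict (cube c r)))⁻¹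
  else phiAvg θ c r (fun y => ENNReal.ofReal (w y) ^ (1 - p / (p - 1))) ^ (1 - p⁻¹)

section ApFactor

variable {n : ℕ} {c : En n} {r : ℝ}

theorem volume_restrict_cube_ne_zero (hr : 0 < r) : volume.restrict (cube c r) ≠ 0 := by
  rw [Ne, Measure.restrict_eq_zero, volume_cube c hr.le, ENNReal.ofReal_eq_zero, not_le]
  positivity

theorem essInf_ofReal_cube_ne_top (hr : 0 < r) (w : En n → ℝ) :
    essInf (fun y => ENNReal.ofReal (w y)) (volume.restrict (cube c r)) ≠ ⊤ := by
  have := ae_neBot.2 (volume_restrict_cube_ne_zero (c := c) hr)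
  obtain ⟨y, hy⟩ := (ae_essInf_le (f := fun y => ENNReal.ofReal (w y))
    (μ := volume.restrict (cube c r))).exists
  exact ne_top_of_le_ne_top ENNReal.ofReal_ne_top hy

theorem apFactor_ne_zero {p θ : ℝ} (hp : 1 ≤ p) {w : En n → ℝ} (hw : AEMeasurable w)
    (hr : 0 < r) : apFactor p θ w c r ≠ 0 := by
  unfold apFactor
  split_ifs with hp1
  · exact ENNReal.inv_ne_zero.2 (essInf_ofReal_cube_ne_top hr w)
  have hp1 : 1 < p := lt_of_le_of_ne hp (Ne.symm hp1)
  have hexp := one_sub_div_sub_one_neg hp1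
  have hpinv : p⁻¹ < 1 := inv_lt_one_of_one_lt₀ hp1
  have := ae_neBot.2 (volume_restrict_cube_ne_zero (c := c) hr)
  intro h
  rcases ENNReal.rpow_eq_zero_iff.1 h with ⟨hz, -⟩ | ⟨-, hneg⟩
  · refine mul_ne_zero (ENNReal.inv_ne_zero.2 (phiVol_ne_top hr.le)) ?_ hz
    rw [Ne, lintegral_eq_zero_iff' (hw.restrict.ennreal_ofReal.pow_const _)]
    intro h
    obtain ⟨y, hy⟩ := h.exists
    rcases ENNReal.rpow_eq_zero_iff.1 hy with ⟨-, hlt⟩ | ⟨htop, -⟩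
    · linarith
    · exact ENNReal.ofReal_ne_top htop
  · linarith

theorem lintegral_ofReal_abs_rpow_mul {p : ℝ} (hp : 0 ≤ p) (μ : Measure (En n))
    (f w : En n → ℝ) :
    ∫⁻ y, ENNReal.ofReal (|f y| ^ p * w y) ∂μ =
      ∫⁻ y, ENNReal.ofReal |f y| ^ p * ENNReal.ofReal (w y) ∂μ := by
  congr with y
  rw [ENNReal.ofReal_mul (by positivity), ENNReal.ofReal_rpow_of_nonneg (abs_nonneg _) hp]

theorem phiAvg_le_phiAvg_mul_essInf_inv {θ : ℝ} {w f : En n → ℝ} (hr : 0 < r)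
    (hI : essInf (fun y => ENNReal.ofReal (w y)) (volume.restrict (cube c r)) ≠ 0) :
    phiAvg θ c r (fun y => ENNReal.ofReal |f y|) ≤
      phiAvg θ c r (fun y => ENNReal.ofReal (|f y| * w y)) *
        (essInf (fun y => ENNReal.ofReal (w y)) (volume.restrict (cube c r)))⁻¹ := by
  unfold phiAvg
  simp_rw [ENNReal.ofReal_mul (abs_nonneg _)]
  calc (phiVol θ c r)⁻¹ * ∫⁻ y in cube c r, ENNReal.ofReal |f y|
      ≤ (phiVol θ c r)⁻¹ * ((essInf (fun y => ENNReal.ofReal (w y))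
          (volume.restrict (cube c r)))⁻¹ *
          ∫⁻ y in cube c r, ENNReal.ofReal |f y| * ENNReal.ofReal (w y)) := by
        gcongr
        exact lintegral_le_essInf_inv_mul_lintegral hI (essInf_ofReal_cube_ne_top hr w)
    _ = _ := by ring

theorem phiAvg_le_phiAvg_rpow_mul_phiAvg_rpow {p θ : ℝ} (hp : 1 < p) {w f : En n → ℝ}
    (hw : AEMeasurable w) (hf : AEMeasurable f)
    (hJ : ∫⁻ y in cube c r, ENNReal.ofReal (w y) ^ (1 - p / (p - 1)) ≠ ⊤) :
    phiAvg θ c r (fun y => ENNReal.ofReal |f y|) ≤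
      phiAvg θ c r (fun y => ENNReal.ofReal (|f y| ^ p * w y)) ^ p⁻¹ *
        phiAvg θ c r (fun y => ENNReal.ofReal (w y) ^ (1 - p / (p - 1))) ^ (1 - p⁻¹) := by
  have hpq : p.HolderConjugate (p / (p - 1)) :=
    (Real.holderConjugate_iff_eq_conjExponent hp).2 rfl
  have hs : 0 ≤ 1 - p⁻¹ := hpq.one_sub_inv ▸ hpq.symm.inv_nonneg
  have hw0 : ∀ᵐ y ∂volume.restrict (cube c r), ENNReal.ofReal (w y) ≠ 0 := by
    filter_upwards [ae_lt_top' (hw.restrict.ennreal_ofReal.pow_const _) hJ] with y hy h0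
    rw [h0, ENNReal.zero_rpow_of_neg (one_sub_div_sub_one_neg hp)] at hy
    exact hy.ne rfl
  have hHolder := lintegral_le_lintegral_rpow_mul_weight hpq hf.restrict.abs.ennreal_ofReal
    hw.restrict.ennreal_ofReal hw0 (ae_of_all _ fun _ => ENNReal.ofReal_ne_top)
  rw [← hpq.one_sub_inv, ← lintegral_ofReal_abs_rpow_mul (by linarith)] at hHolder
  unfold phiAvg
  set Φ := phiVol θ c r
  calc Φ⁻¹ * ∫⁻ y in cube c r, ENNReal.ofReal |f y|
      ≤ Φ⁻¹ ^ (p⁻¹ + (1 - p⁻¹)) * ((∫⁻ y in cube c r, ENNReal.ofReal (|f y| ^ p * w y)) ^ p⁻¹ *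
          (∫⁻ y in cube c r, ENNReal.ofReal (w y) ^ (1 - p / (p - 1))) ^ (1 - p⁻¹)) := by
        rw [add_sub_cancel, ENNReal.rpow_one]
        gcongr
    _ = _ := by
        rw [ENNReal.rpow_add_of_nonneg _ _ hpq.inv_nonneg hs,
          ENNReal.mul_rpow_of_nonneg _ _ hpq.inv_nonneg, ENNReal.mul_rpow_of_nonneg _ _ hs]
        ring

theorem phiAvg_le_apFactor_mul {p θ : ℝ} (hp : 1 ≤ p) {w f : En n → ℝ} (hw : AEMeasurable w)
    (hf : AEMeasurable f) (hr : 0 < r) (hB : apFactor p θ w c r ≠ ⊤) :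
    phiAvg θ c r (fun y => ENNReal.ofReal |f y|) ≤
      phiAvg θ c r (fun y => ENNReal.ofReal (|f y| ^ p * w y)) ^ p⁻¹ *
        apFactor p θ w c r := by
  unfold apFactor at hB ⊢
  split_ifs at hB ⊢ with hp1
  · subst hp1
    simpa only [Real.rpow_one, inv_one, ENNReal.rpow_one] using
      phiAvg_le_phiAvg_mul_essInf_inv hr (ENNReal.inv_ne_top.1 hB)
  have hp1 : 1 < p := lt_of_le_of_ne hp (Ne.symm hp1)
  refine phiAvg_le_phiAvg_rpow_mul_phiAvg_rpow hp1 hw hf fun hJ => hB ?_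
  rw [phiAvg, hJ, ENNReal.mul_top (ENNReal.inv_ne_zero.2 (phiVol_ne_top hr.le)),
    ENNReal.top_rpow_of_pos (sub_pos.2 (inv_lt_one_of_one_lt₀ hp1))]

end ApFactor

def MultiApBound {n m : ℕ} (p : Fin m → ℝ) (θ : ℝ) (w : Fin m → En n → ℝ) (C : ℝ) : Prop :=
  ∀ (x : En n) (r : ℝ), 0 < r →
    phiAvg θ x r (fun y => ENNReal.ofReal (nuW p w y)) ^ (∑ i, (p i)⁻¹) *
      ∏ j, apFactor (p j) θ (w j) x r ≤ ENNReal.ofReal C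

theorem multiApTheta_iff {n m : ℕ} {p : Fin m → ℝ} {θ : ℝ} {w : Fin m → En n → ℝ} :
    MultiApTheta n m p θ w ↔ (∀ j x, 0 ≤ w j x) ∧ (∀ j, LocallyIntegrable (w j) volume) ∧
      ∃ C > 0, MultiApBound p θ w C :=
  Iff.rfl

def nuMeasure {n m : ℕ} (p : Fin m → ℝ) (w : Fin m → En n → ℝ) : Measure (En n) :=
  volume.withDensity fun x => ENNReal.ofReal (nuW p w x)

theorem nuMeasure_apply {n m : ℕ} (p : Fin m → ℝ) (w : Fin m → En n → ℝ) (s : Set (En n)) :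
    nuMeasure p w s = ∫⁻ x in s, ENNReal.ofReal (nuW p w x) :=
  withDensity_apply' _ s

theorem multiMax_gt_iff {n m : ℕ} {θ₀ : ℝ} {f : Fin m → En n → ℝ} {s : ℝ≥0∞} {x : En n} :
    s < multiMax n m θ₀ f x ↔ ∃ c r, 0 < r ∧ x ∈ cube c r ∧
      s < ∏ j, phiAvg θ₀ c r (fun y => ENNReal.ofReal |f j y|) := by
  simp only [multiMax, lt_iSup_iff, exists_prop, phiAvg, phiVol]

theorem lintegral_nuW_rpow_mul_prod_phiAvg_le {n m : ℕ} [NeZero m] {p : Fin m → ℝ}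
    (hp : ∀ j, 1 ≤ p j) {w : Fin m → En n → ℝ} (hw : ∀ j, AEMeasurable (w j))
    {θ θ₀ C₀ : ℝ} (hθ : θ ≤ θ₀) {c : En n} {r : ℝ} (hr : 0 < r)
    (hA : phiAvg θ c r (fun y => ENNReal.ofReal (nuW p w y)) ^ (∑ i, (p i)⁻¹) *
      ∏ j, apFactor (p j) θ (w j) c r ≤ ENNReal.ofReal C₀)
    {f : Fin m → En n → ℝ} (hf : ∀ j, AEMeasurable (f j)) :
    (∫⁻ y in cube c r, ENNReal.ofReal (nuW p w y)) ^ (∑ i, (p i)⁻¹) *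
        ∏ j, phiAvg θ₀ c r (fun y => ENNReal.ofReal |f j y|) ≤
      ENNReal.ofReal C₀ *
        ∏ j, (∫⁻ y in cube c r, ENNReal.ofReal (|f j y| ^ p j * w j y)) ^ (p j)⁻¹ := by
  set q := ∑ i, (p i)⁻¹
  have hq : 0 < q := sum_inv_pos hp
  set ν := ∫⁻ y in cube c r, ENNReal.ofReal (nuW p w y)
  set Φ := phiVol θ c r
  set B := fun j => apFactor (p j) θ (w j) c r
  have hΦ0 : Φ⁻¹ ≠ 0 := ENNReal.inv_ne_zero.2 (phiVol_ne_top hr.le)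
  have hΦtop : Φ⁻¹ ≠ ⊤ := ENNReal.inv_ne_top.2 (phiVol_ne_zero hr)
  rcases eq_or_ne ν 0 with hν | hν
  · rw [hν, ENNReal.zero_rpow_of_pos hq, zero_mul]
    exact zero_le
  have hB : ∀ j, B j ≠ ⊤ := by
    intro j hj
    have hXq : (Φ⁻¹ * ν) ^ q ≠ 0 :=
      (ENNReal.rpow_pos_of_nonneg (pos_iff_ne_zero.2 (mul_ne_zero hΦ0 hν)) hq.le).ne'
    have hprod : ∏ j, B j = ⊤ := WithTop.prod_eq_top (Finset.mem_univ j) hj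
      fun k _ => apFactor_ne_zero (hp k) (hw k) hr
    rw [phiAvg, hprod, ENNReal.mul_top hXq] at hA
    exact ENNReal.ofReal_ne_top (top_le_iff.1 hA)
  set N := fun j => ∫⁻ y in cube c r, ENNReal.ofReal (|f j y| ^ p j * w j y)
  have hsplit : ∀ j, (Φ⁻¹ * N j) ^ (p j)⁻¹ = Φ⁻¹ ^ (p j)⁻¹ * N j ^ (p j)⁻¹ := fun j =>
    ENNReal.mul_rpow_of_nonneg _ _ (inv_nonneg.2 (by linarith [hp j]))
  have hΦq : ∏ j, Φ⁻¹ ^ (p j)⁻¹ = Φ⁻¹ ^ q := ENNReal.prod_rpow_eq_rpow_sum _ hΦ0 hΦtop _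
  calc ν ^ q * ∏ j, phiAvg θ₀ c r (fun y => ENNReal.ofReal |f j y|)
      ≤ ν ^ q * ∏ j, phiAvg θ c r (fun y => ENNReal.ofReal |f j y|) := by
        gcongr with j
        exact phiAvg_anti_exponent hθ hr.le _
    _ ≤ ν ^ q * ∏ j, ((Φ⁻¹ * N j) ^ (p j)⁻¹ * B j) := by
        gcongr with j
        exact phiAvg_le_apFactor_mul (hp j) (hw j) (hf j) hr (hB j)
    _ = (Φ⁻¹ * ν) ^ q * (∏ j, B j) * ∏ j, N j ^ (p j)⁻¹ := by
        simp only [hsplit, Finset.prod_mul_distrib, hΦq, ENNReal.mul_rpow_of_nonneg _ _ hq.le]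
        ring
    _ ≤ ENNReal.ofReal C₀ * ∏ j, N j ^ (p j)⁻¹ := mul_le_mul_left hA _

theorem prod_phiAvg_le_pow_mul_prod_phiAvg_two_mul {n m : ℕ} {θ : ℝ} (hθ : 0 ≤ θ) {c x : En n}
    {r : ℝ} (hr : 0 < r) (hx : x ∈ cube c r) (g : Fin m → En n → ℝ≥0∞) :
    ∏ j, phiAvg θ c r (g j) ≤
      ENNReal.ofReal (2 ^ ((n : ℝ) + θ)) ^ m * ∏ j, phiAvg θ x (2 * r) (g j) := by
  calc ∏ j, phiAvg θ c r (g j)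
      ≤ ∏ j, ENNReal.ofReal (2 ^ ((n : ℝ) + θ)) * phiAvg θ x (2 * r) (g j) := by
        gcongr with j
        exact phiAvg_le_phiAvg_two_mul hθ hr hx _
    _ = _ := by
        rw [Finset.prod_mul_distrib, Finset.prod_const, Finset.card_univ, Fintype.card_fin]

theorem nuMeasure_cube_two_mul_le {n m : ℕ} [NeZero m] {p : Fin m → ℝ} (hp : ∀ j, 1 ≤ p j)
    {w : Fin m → En n → ℝ} (hw : ∀ j, AEMeasurable (w j)) {θ θ₀ C₀ : ℝ} (hθ₀ : 0 ≤ θ₀)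
    (hθθ₀ : θ ≤ θ₀) (hA : MultiApBound p θ w C₀) {f : Fin m → En n → ℝ}
    (hf : ∀ j, AEMeasurable (f j)) {t : ℝ} (ht : 0 < t) {c x : En n} {r : ℝ} (hr : 0 < r)
    (hx : x ∈ cube c r)
    (hlt : ENNReal.ofReal t < ∏ j, phiAvg θ₀ c r (fun y => ENNReal.ofReal |f j y|)) :
    nuMeasure p w (cube x (2 * r)) ≤
      (ENNReal.ofReal (2 ^ ((n : ℝ) + θ₀)) ^ m * ENNReal.ofReal C₀ / ENNReal.ofReal t) ^
          (∑ i, (p i)⁻¹)⁻¹ *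
        ∏ j, (∫⁻ y in cube x (2 * r), ENNReal.ofReal (|f j y| ^ p j * w j y)) ^
          ((p j)⁻¹ * (∑ i, (p i)⁻¹)⁻¹) := by
  set q := ∑ i, (p i)⁻¹
  have hq : 0 < q := sum_inv_pos hp
  set K := ENNReal.ofReal (2 ^ ((n : ℝ) + θ₀))
  set N := fun j => ∫⁻ y in cube x (2 * r), ENNReal.ofReal (|f j y| ^ p j * w j y)
  have ht0 : ENNReal.ofReal t ≠ 0 := (ENNReal.ofReal_pos.2 ht).ne'
  have hdouble := hlt.le.trans (prod_phiAvg_le_pow_mul_prod_phiAvg_two_mul hθ₀ hr hx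
    fun j y => ENNReal.ofReal |f j y|)
  have hkey := lintegral_nuW_rpow_mul_prod_phiAvg_le hp hw hθθ₀ (by positivity : 0 < 2 * r)
    (hA x (2 * r) (by positivity)) hf
  have hq' : nuMeasure p w (cube x (2 * r)) ^ q ≤ K ^ m * ENNReal.ofReal C₀ / ENNReal.ofReal t *
      ∏ j, N j ^ (p j)⁻¹ := by
    rw [div_eq_mul_inv, mul_right_comm, ← div_eq_mul_inv,
      ENNReal.le_div_iff_mul_le (Or.inl ht0) (Or.inl ENNReal.ofReal_ne_top), nuMeasure_apply]
    calc _ ≤ (∫⁻ y in cube x (2 * r), ENNReal.ofReal (nuW p w y)) ^ q *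
          (K ^ m * ∏ j, phiAvg θ₀ x (2 * r) (fun y => ENNReal.ofReal |f j y|)) := by
          gcongr
      _ ≤ K ^ m * (ENNReal.ofReal C₀ * ∏ j, N j ^ (p j)⁻¹) := by
          rw [mul_left_comm]
          gcongr
      _ = _ := by ring
  calc nuMeasure p w (cube x (2 * r)) = (nuMeasure p w (cube x (2 * r)) ^ q) ^ q⁻¹ := by
        rw [← ENNReal.rpow_mul, mul_inv_cancel₀ hq.ne', ENNReal.rpow_one]
    _ ≤ (K ^ m * ENNReal.ofReal C₀ / ENNReal.ofReal t * ∏ j, N j ^ (p j)⁻¹) ^ q⁻¹ := by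
        gcongr
    _ = _ := by
        rw [ENNReal.mul_rpow_of_nonneg _ _ (inv_nonneg.2 hq.le),
          ← ENNReal.prod_rpow_of_nonneg (inv_nonneg.2 hq.le)]
        simp only [← ENNReal.rpow_mul]
        rfl

/-- Besicovitch: centred cubes covering `range x` split into `N` disjoint subfamilies. -/
theorem measure_range_le_of_tsum_disjoint_cubes_le {n N : ℕ} {τ : ℝ} (hτ : 1 < τ)
    (hN : IsEmpty (Besicovitch.SatelliteConfig (Fin n → ℝ) N τ)) (μ : Measure (En n))
    {β : Type*} (x : β → En n) {ρ : β → ℝ} (hρ : ∀ b, 0 < ρ b) {R : ℝ} (hR : ∀ b, ρ b ≤ R)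
    {A : ℝ≥0∞} (hA : ∀ u : Set β, u.Countable →
      u.PairwiseDisjoint (fun b => cube (x b) (2 * ρ b)) → ∑' b : u, μ (cube (x b) (2 * ρ b)) ≤ A) :
    μ (range x) ≤ N * A := by
  obtain ⟨u, hu, hcover⟩ := Besicovitch.exist_disjoint_covering_families hτ hN
    ⟨fun b => WithLp.ofLp (x b), ρ, hρ, R, hR⟩
  have hcube : ∀ b, WithLp.ofLp ⁻¹' Metric.closedBall (WithLp.ofLp (x b)) (ρ b) =
      cube (x b) (2 * ρ b) := fun b => (cube_two_mul_eq_preimage_closedBall _ (hρ b).le).symm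
  have hdisj : ∀ i, (u i).PairwiseDisjoint fun b => cube (x b) (2 * ρ b) :=
    fun i a ha b hb hab => by
      rw [Function.onFun, ← hcube, ← hcube]
      exact (hu i ha hb hab).preimage _
  have hcount : ∀ i, (u i).Countable := fun i =>
    ((hu i).mono fun _ => Metric.ball_subset_closedBall).countable_of_isOpen
      (fun _ _ => Metric.isOpen_ball) fun b _ => Metric.nonempty_ball.2 (hρ b)
  have hsub : range x ⊆ ⋃ i, ⋃ b ∈ u i, cube (x b) (2 * ρ b) := by
    rintro _ ⟨b₀, rfl⟩
    obtain ⟨i, hi⟩ := mem_iUnion.1 (hcover ⟨b₀, rfl⟩)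
    obtain ⟨b, hb, hball⟩ := mem_iUnion₂.1 hi
    refine mem_iUnion.2 ⟨i, mem_iUnion₂.2 ⟨b, hb, ?_⟩⟩
    rw [← hcube]
    exact Metric.ball_subset_closedBall hball
  calc μ (range x) ≤ μ (⋃ i, ⋃ b ∈ u i, cube (x b) (2 * ρ b)) := measure_mono hsub
    _ ≤ ∑ i, μ (⋃ b ∈ u i, cube (x b) (2 * ρ b)) := measure_iUnion_fintype_le _ _
    _ ≤ ∑ i, ∑' b : u i, μ (cube (x b) (2 * ρ b)) :=
        Finset.sum_le_sum fun i _ => measure_biUnion_le μ (hcount i) _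
    _ ≤ ∑ _i : Fin N, A := Finset.sum_le_sum fun i _ => hA _ (hcount i) (hdisj i)
    _ = N * A := by simp

structure LevelCube (n m : ℕ) (θ₀ : ℝ) (f : Fin m → En n → ℝ) (t R : ℝ) where
  x : En n
  c : En n
  r : ℝ
  r_pos : 0 < r
  r_le : r ≤ R
  mem : x ∈ cube c r
  lt_prod : ENNReal.ofReal t < ∏ j, phiAvg θ₀ c r (fun y => ENNReal.ofReal |f j y|)

theorem setOf_lt_multiMax_eq_iUnion {n m : ℕ} (θ₀ : ℝ) (f : Fin m → En n → ℝ) (t : ℝ) :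
    {x | ENNReal.ofReal t < multiMax n m θ₀ f x} =
      ⋃ R : ℕ, range (LevelCube.x (θ₀ := θ₀) (f := f) (t := t) (R := R)) := by
  ext x
  simp only [mem_ofPred_eq, mem_iUnion, mem_range, multiMax_gt_iff]
  constructor
  · rintro ⟨c, r, hr, hx, hlt⟩
    exact ⟨⌈r⌉₊, ⟨x, c, r, hr, Nat.le_ceil r, hx, hlt⟩, rfl⟩
  · rintro ⟨R, b, rfl⟩
    exact ⟨b.c, b.r, b.r_pos, b.mem, b.lt_prod⟩

theorem monotone_range_levelCube_x {n m : ℕ} (θ₀ : ℝ) (f : Fin m → En n → ℝ) (t : ℝ) :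
    Monotone fun R : ℕ => range (LevelCube.x (θ₀ := θ₀) (f := f) (t := t) (R := R)) := by
  rintro R R' hR _ ⟨b, rfl⟩
  exact ⟨{ b with r_le := b.r_le.trans (Nat.cast_le.2 hR) }, rfl⟩

theorem nuMeasure_setOf_lt_multiMax_le {n m N : ℕ} [NeZero m] {τ : ℝ} (hτ : 1 < τ)
    (hN : IsEmpty (Besicovitch.SatelliteConfig (Fin n → ℝ) N τ)) {p : Fin m → ℝ}
    (hp : ∀ j, 1 ≤ p j) {w : Fin m → En n → ℝ} (hw : ∀ j, AEMeasurable (w j))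
    {θ θ₀ C₀ : ℝ} (hθ₀ : 0 ≤ θ₀) (hθθ₀ : θ ≤ θ₀) (hA : MultiApBound p θ w C₀)
    {f : Fin m → En n → ℝ} (hf : ∀ j, AEMeasurable (f j)) {t : ℝ} (ht : 0 < t) :
    nuMeasure p w {x | ENNReal.ofReal t < multiMax n m θ₀ f x} ≤
      N * ((ENNReal.ofReal (2 ^ ((n : ℝ) + θ₀)) ^ m * ENNReal.ofReal C₀ / ENNReal.ofReal t) ^
          (∑ i, (p i)⁻¹)⁻¹ *
        ∏ j, (∫⁻ y, ENNReal.ofReal (|f j y| ^ p j * w j y)) ^ ((p j)⁻¹ * (∑ i, (p i)⁻¹)⁻¹)) := by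
  have hq := sum_inv_pos hp
  rw [setOf_lt_multiMax_eq_iUnion, (monotone_range_levelCube_x θ₀ f t).measure_iUnion]
  refine iSup_le fun R => measure_range_le_of_tsum_disjoint_cubes_le hτ hN _ _
    LevelCube.r_pos LevelCube.r_le fun u hu hdisj => ?_
  have := hu.to_subtype
  refine (ENNReal.tsum_le_tsum fun b => nuMeasure_cube_two_mul_le hp hw hθ₀ hθθ₀ hA hf ht
    b.1.r_pos b.1.mem b.1.lt_prod).trans ?_
  rw [ENNReal.tsum_mul_left]
  gcongr
  exact tsum_prod_setLIntegral_rpow_le (fun _ => measurableSet_cube _ _)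
    ((pairwise_subtype_iff_pairwise_set u _).2 hdisj) _
    (fun j => mul_nonneg (inv_nonneg.2 (by linarith [hp j])) (inv_nonneg.2 hq.le))
    (by rw [← Finset.sum_mul, mul_inv_cancel₀ hq.ne'])

theorem ofReal_mul_nuMeasure_setOf_lt_multiMax_rpow_le {n m N : ℕ} [NeZero m] {τ : ℝ}
    (hτ : 1 < τ) (hN : IsEmpty (Besicovitch.SatelliteConfig (Fin n → ℝ) N τ))
    {p : Fin m → ℝ} (hp : ∀ j, 1 ≤ p j) {w : Fin m → En n → ℝ} (hw : ∀ j, AEMeasurable (w j))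
    {θ θ₀ C₀ : ℝ} (hθ₀ : 0 ≤ θ₀) (hθθ₀ : θ ≤ θ₀) (hA : MultiApBound p θ w C₀)
    {f : Fin m → En n → ℝ} (hf : ∀ j, AEMeasurable (f j)) {t : ℝ} (ht : 0 < t) :
    ENNReal.ofReal t * nuMeasure p w {x | ENNReal.ofReal t < multiMax n m θ₀ f x} ^
        (∑ i, (p i)⁻¹) ≤
      (N : ℝ≥0∞) ^ (∑ i, (p i)⁻¹) * (ENNReal.ofReal (2 ^ ((n : ℝ) + θ₀)) ^ m *
        ENNReal.ofReal C₀) * ∏ j, wLp (p j) (w j) (f j) := by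
  set q := ∑ i, (p i)⁻¹
  have hq : 0 < q := sum_inv_pos hp
  set A := ENNReal.ofReal (2 ^ ((n : ℝ) + θ₀)) ^ m * ENNReal.ofReal C₀
  have hprod : (∏ j, (∫⁻ y, ENNReal.ofReal (|f j y| ^ p j * w j y)) ^ ((p j)⁻¹ * q⁻¹)) ^ q =
      ∏ j, wLp (p j) (w j) (f j) := by
    rw [← ENNReal.prod_rpow_of_nonneg hq.le]
    refine Finset.prod_congr rfl fun j _ => ?_
    rw [← ENNReal.rpow_mul, mul_assoc, inv_mul_cancel₀ hq.ne', mul_one, wLp, one_div]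
  calc ENNReal.ofReal t * nuMeasure p w {x | ENNReal.ofReal t < multiMax n m θ₀ f x} ^ q
      ≤ ENNReal.ofReal t * (N * ((A / ENNReal.ofReal t) ^ q⁻¹ *
          ∏ j, (∫⁻ y, ENNReal.ofReal (|f j y| ^ p j * w j y)) ^ ((p j)⁻¹ * q⁻¹))) ^ q := by
        gcongr
        exact nuMeasure_setOf_lt_multiMax_le hτ hN hp hw hθ₀ hθθ₀ hA hf ht
    _ = (N : ℝ≥0∞) ^ q * (ENNReal.ofReal t * (A / ENNReal.ofReal t)) *
          ∏ j, wLp (p j) (w j) (f j) := by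
        rw [ENNReal.mul_rpow_of_nonneg _ _ hq.le, ENNReal.mul_rpow_of_nonneg _ _ hq.le, hprod,
          ← ENNReal.rpow_mul, inv_mul_cancel₀ hq.ne', ENNReal.rpow_one]
        ring
    _ = (N : ℝ≥0∞) ^ q * A * ∏ j, wLp (p j) (w j) (f j) := by
        rw [ENNReal.mul_div_cancel (ENNReal.ofReal_pos.2 ht).ne' ENNReal.ofReal_ne_top]

theorem stmt16_general (n m : ℕ) (hm : 1 ≤ m) (p : Fin m → ℝ)
    (hp : ∀ j, 1 ≤ p j) (w : Fin m → En n → ℝ)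
    (hw : ∃ θ ≥ 0, MultiApTheta n m p θ w) :
    ∃ θ₀ > 0, ∃ C > 0, ∀ f : Fin m → En n → ℝ, (∀ j, Measurable (f j)) →
      wLpWeakE n (∑ j, (p j)⁻¹)⁻¹ (nuW p w) (multiMax n m θ₀ f) ≤
        ENNReal.ofReal C * ∏ j, wLp (p j) (w j) (f j) := by
  have : NeZero m := ⟨by omega⟩
  obtain ⟨θ, hθ, hwθ⟩ := hw
  obtain ⟨-, hwloc, C₀, hC₀, hA⟩ := multiApTheta_iff.1 hwθ
  obtain ⟨N, τ, hτ, hN⟩ := HasBesicovitchCovering.no_satelliteConfig (α := Fin n → ℝ)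
  set q := ∑ i, (p i)⁻¹
  refine ⟨θ + 1, by linarith, ((N : ℝ) + 1) ^ q * ((2 : ℝ) ^ ((n : ℝ) + (θ + 1))) ^ m * C₀,
    by positivity, fun f hf => iSup₂_le fun t ht => ?_⟩
  rw [one_div, inv_inv, ← nuMeasure_apply]
  refine (ofReal_mul_nuMeasure_setOf_lt_multiMax_rpow_le hτ hN hp
    (fun j => (hwloc j).aestronglyMeasurable.aemeasurable) (by linarith) (by linarith) hA
    (fun j => (hf j).aemeasurable) ht).trans ?_
  have hq : 0 ≤ q := (sum_inv_pos hp).le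
  have hN1 : (N : ℝ≥0∞) ^ q ≤ ENNReal.ofReal (((N : ℝ) + 1) ^ q) := by
    rw [← ENNReal.ofReal_rpow_of_nonneg (by positivity) hq, ← ENNReal.ofReal_natCast]
    exact ENNReal.rpow_le_rpow (ENNReal.ofReal_le_ofReal (by linarith)) hq
  rw [ENNReal.ofReal_mul (by positivity), ENNReal.ofReal_mul (by positivity),
    ENNReal.ofReal_pow (by positivity), mul_assoc (ENNReal.ofReal _)]
  gcongr

/-- Lemma 2.7: weak-type weighted boundedness of the multilinear maximal
operator `𝓜_{φ,θ₀}` for `ω⃗ ∈ A_{p⃗}^∞(φ)` with all `p_j ≥ 1`. -/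
theorem stmt16 (n m : ℕ) (hn : 0 < n) (hm : 1 ≤ m) (p : Fin m → ℝ)
    (hp : ∀ j, 1 ≤ p j) (w : Fin m → En n → ℝ)
    (hw : ∃ θ ≥ 0, MultiApTheta n m p θ w) :
    ∃ θ₀ > 0, ∃ C > 0, ∀ f : Fin m → En n → ℝ, (∀ j, Measurable (f j)) →
      wLpWeakE n (∑ j, (p j)⁻¹)⁻¹ (nuW p w) (multiMax n m θ₀ f) ≤
        ENNReal.ofReal C * ∏ j, wLp (p j) (w j) (f j) :=
  stmt16_general n m hm p hp w hw

end
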